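/- arXiv:2304.08553 — 9 statements merged into one kernel-verified Lean document; each statement's English description precedes it below -/
import Mathlib

section
/- Given a partition-size vector p = (p_1, ..., p_K) with each p_k > 1 and p = p_1 + ... + p_K, the block Hadamard product representation of a uniform-block matrix is unique: if A_1 ∘ I[p] + B_1 ∘ J[p] = A_2 ∘ I[p] + B_2 ∘ J[p] where A_1, A_2 are K×K diagonal matrices and B_1, B_2 are K×K symmetric matrices, then A_1 = A_2 and B_1 = B_2. -/
open Matrix BigOperators

/-- Block-diagonal expansion `A ∘ I[p]`: the `p × p` matrix `Bdiag(a₁ I_{p₁}, …, a_K I_{p_K})`,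
indexed by the sigma type `Σ k, Fin (p k)`. -/
def blockI {K : ℕ} (p : Fin K → ℕ) (a : Fin K → ℝ) :
    Matrix (Σ k, Fin (p k)) (Σ k, Fin (p k)) ℝ :=
  Matrix.diagonal (fun i => a i.1)

/-- Block all-ones expansion `B ∘ J[p]`: the `p × p` matrix whose `(k,k')` block is
`B k k' • 1_{p_k × p_{k'}}`. -/
def blockJ {K : ℕ} (p : Fin K → ℕ) (B : Matrix (Fin K) (Fin K) ℝ) :
    Matrix (Σ k, Fin (p k)) (Σ k, Fin (p k)) ℝ :=
  fun i j => B i.1 j.1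

/-- `P = diag(p₁, …, p_K)`. -/
def Pmat {K : ℕ} (p : Fin K → ℕ) : Matrix (Fin K) (Fin K) ℝ :=
  Matrix.diagonal (fun k => (p k : ℝ))

/-- Uniqueness of the block Hadamard product representation of a uniform-block matrix. -/
theorem blockHadamard_rep_unique {K : ℕ} (p : Fin K → ℕ) (hp : ∀ k, 1 < p k)
    (a₁ a₂ : Fin K → ℝ) (B₁ B₂ : Matrix (Fin K) (Fin K) ℝ)
    (hB₁ : B₁.IsSymm) (hB₂ : B₂.IsSymm)
    (h : blockI p a₁ + blockJ p B₁ = blockI p a₂ + blockJ p B₂) :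
    a₁ = a₂ ∧ B₁ = B₂ := by
  have key : ∀ k k' (i : Fin (p k)) (j : Fin (p k')),
      (⟨k,i⟩ : Σ k, Fin (p k)) ≠ ⟨k',j⟩ → B₁ k k' = B₂ k k' := by
    intro k k' i j hne
    have := congrFun (congrFun h ⟨k,i⟩) ⟨k',j⟩
    simpa [blockI, blockJ, Matrix.diagonal, hne] using this
  have hB : B₁ = B₂ := by
    ext k k'
    have h0 : 0 < p k := lt_trans one_pos (hp k)
    have h1 : 1 < p k := hp k
    by_cases hkk : k = k'
    · subst hkk
      exact key k k ⟨0, h0⟩ ⟨1, h1⟩ (by simp [Fin.ext_iff])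
    · exact key k k' ⟨0, h0⟩ ⟨0, lt_trans one_pos (hp k')⟩ (by simp [hkk])
  refine ⟨?_, hB⟩
  funext k
  have h0 : 0 < p k := lt_trans one_pos (hp k)
  have := congrFun (congrFun h ⟨k,⟨0,h0⟩⟩) ⟨k,⟨0,h0⟩⟩
  simp [blockI, blockJ, Matrix.diagonal, hB] at this
  linarith [this]
end

section
/- The product of two uniform-block matrices N_1 = A_1 ∘ I[p] + B_1 ∘ J[p] and N_2 = A_2 ∘ I[p] + B_2 ∘ J[p] with a common partition-size vector p is a uniform-block matrix N_1 × N_2 = (A_1 × A_2) ∘ I[p] + (A_1 × B_2 + B_1 × A_2 + B_1 × P × B_2) ∘ J[p], where P = diag(p_1,...,p_K). -/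
open Matrix BigOperators

lemma blockJ_add {K : ℕ} (p : Fin K → ℕ) (B C : Matrix (Fin K) (Fin K) ℝ) :
    blockJ p (B + C) = blockJ p B + blockJ p C := by
  ext i j; simp [blockJ]

lemma blockI_mul_blockI {K : ℕ} (p : Fin K → ℕ) (a b : Fin K → ℝ) :
    blockI p a * blockI p b = blockI p (a * b) := by
  simp [blockI, Matrix.diagonal_mul_diagonal]

lemma blockI_mul_blockJ {K : ℕ} (p : Fin K → ℕ) (a : Fin K → ℝ)
    (B : Matrix (Fin K) (Fin K) ℝ) :
    blockI p a * blockJ p B = blockJ p (Matrix.diagonal a * B) := by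
  ext i j
  simp [blockI, blockJ, Matrix.mul_apply, Matrix.diagonal_apply, Finset.sum_ite_eq,
    Matrix.diagonal_mul]

lemma blockJ_mul_blockI {K : ℕ} (p : Fin K → ℕ) (a : Fin K → ℝ)
    (B : Matrix (Fin K) (Fin K) ℝ) :
    blockJ p B * blockI p a = blockJ p (B * Matrix.diagonal a) := by
  ext i j
  simp [blockI, blockJ, Matrix.mul_apply, Matrix.diagonal_apply, Finset.sum_ite_eq,
    Matrix.mul_diagonal]

lemma blockJ_mul_blockJ {K : ℕ} (p : Fin K → ℕ) (B C : Matrix (Fin K) (Fin K) ℝ) :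
    blockJ p B * blockJ p C = blockJ p (B * Pmat p * C) := by
  ext i j
  simp only [blockJ, Matrix.mul_apply, Pmat, Matrix.mul_diagonal]
  rw [← Finset.univ_sigma_univ, Finset.sum_sigma]
  simp only [Matrix.mul_diagonal, Finset.sum_const, Finset.card_univ, Fintype.card_fin,
    nsmul_eq_mul]
  congr 1; ext k
  rw [Finset.sum_eq_single (f := fun l => B i.fst l * Matrix.diagonal (fun k => ((p k : ℕ) : ℝ)) l k) k
    (by intro b _ h; simp [Matrix.diagonal_apply_ne _ h]) (by simp)]
  simp [Matrix.diagonal]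
  ring

/-- The product of two uniform-block matrices with common partition-size vector is uniform-block:
`N₁ × N₂ = (A₁A₂) ∘ I[p] + (A₁B₂ + B₁A₂ + B₁ P B₂) ∘ J[p]`. -/
theorem blockHadamard_mul {K : ℕ} (p : Fin K → ℕ) (a₁ a₂ : Fin K → ℝ)
    (B₁ B₂ : Matrix (Fin K) (Fin K) ℝ) :
    (blockI p a₁ + blockJ p B₁) * (blockI p a₂ + blockJ p B₂) =
      blockI p (a₁ * a₂) +
        blockJ p (Matrix.diagonal a₁ * B₂ + B₁ * Matrix.diagonal a₂ + B₁ * Pmat p * B₂) := by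
  rw [Matrix.add_mul, Matrix.mul_add, Matrix.mul_add, blockI_mul_blockI,
    blockI_mul_blockJ, blockJ_mul_blockI, blockJ_mul_blockJ, blockJ_add, blockJ_add]
  abel
end

section
/- The square of a uniform-block matrix N = A ∘ I[p] + B ∘ J[p] is the uniform-block matrix N² = (A²) ∘ I[p] + (A×B + B×A + B×P×B) ∘ J[p], where P = diag(p_1,...,p_K). -/
open Matrix BigOperators

/-- The square of a uniform-block matrix:
`N² = A² ∘ I[p] + (AB + BA + BPB) ∘ J[p]`. -/
theorem blockHadamard_sq {K : ℕ} (p : Fin K → ℕ) (a : Fin K → ℝ)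
    (B : Matrix (Fin K) (Fin K) ℝ) :
    (blockI p a + blockJ p B) ^ 2 =
      blockI p (a * a) +
        blockJ p (Matrix.diagonal a * B + B * Matrix.diagonal a + B * Pmat p * B) := by
  have h1 : blockI p a * blockI p a = blockI p (a * a) := by
    simp [blockI, Matrix.diagonal_mul_diagonal]
  have h2 : blockI p a * blockJ p B = blockJ p (Matrix.diagonal a * B) := by
    ext i j
    simp [blockI, blockJ, Matrix.diagonal_mul, Matrix.mul_apply, Matrix.diagonal_apply,
      Finset.sum_ite_eq, ite_mul]
  have h3 : blockJ p B * blockI p a = blockJ p (B * Matrix.diagonal a) := by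
    ext i j
    simp [blockI, blockJ, Matrix.mul_apply, Matrix.diagonal_apply, mul_ite,
      Finset.sum_ite_eq]
  have h4 := blockJ_mul_blockJ p B B
  have hJ : ∀ (X Y : Matrix (Fin K) (Fin K) ℝ),
      blockJ p X + blockJ p Y = blockJ (K := K) p (X + Y) := by
    intro X Y; ext i j; simp [blockJ]
  rw [sq, add_mul, mul_add, mul_add, h1, h2, h3, h4, add_assoc, add_assoc, hJ, hJ]
end

section
/- The determinant of a uniform-block matrix N = A ∘ I[p] + B ∘ J[p] equals (∏_{k=1}^K a_kk^{p_k - 1}) × det(Δ), where Δ = A + B × P and P = diag(p_1,...,p_K). -/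
open Matrix BigOperators

/-- The `p × K` "inclusion indicator" matrix. -/
def Emat {K : ℕ} (p : Fin K → ℕ) : Matrix (Σ k, Fin (p k)) (Fin K) ℝ :=
  fun i k => if i.1 = k then 1 else 0

lemma blockJ_eq {K : ℕ} (p : Fin K → ℕ) (B : Matrix (Fin K) (Fin K) ℝ) :
    blockJ p B = Emat p * (B * (Emat p)ᵀ) := by
  ext i j
  simp [blockJ, Emat, Matrix.mul_apply, ite_mul, mul_ite, Finset.sum_ite_eq,
    Finset.sum_ite_eq']

lemma Emat_inner {K : ℕ} (p : Fin K → ℕ) (b : Fin K → ℝ) :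
    (Emat p)ᵀ * (Matrix.diagonal (fun i : Σ k, Fin (p k) => b i.1) * Emat p) =
      Matrix.diagonal (fun k => (p k : ℝ) * b k) := by
  ext k k'
  have h1 : ∀ i : Σ k, Fin (p k),
      (Emat p)ᵀ k i * ((Matrix.diagonal (fun i : Σ k, Fin (p k) => b i.1) * Emat p) i k')
        = if i.1 = k then (if i.1 = k' then b i.1 else 0) else 0 := by
    intro i
    rw [Matrix.diagonal_mul]
    simp only [Emat, Matrix.transpose_apply, mul_ite, ite_mul, one_mul, zero_mul]
    split_ifs <;> simp_all
  rw [Matrix.mul_apply]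
  simp_rw [h1]
  rw [← Finset.univ_sigma_univ, Finset.sum_sigma]
  rcases eq_or_ne k k' with rfl | h
  · rw [Matrix.diagonal_apply_eq]
    rw [Finset.sum_eq_single k]
    · simp [mul_comm]
    · intro l _ hl
      simp [hl]
    · simp
  · rw [Matrix.diagonal_apply_ne _ h]
    apply Finset.sum_eq_zero
    intro l _
    apply Finset.sum_eq_zero
    intro j _
    rcases eq_or_ne l k with rfl | hl
    · simp [h]
    · simp [hl]

lemma blockI_det {K : ℕ} (p : Fin K → ℕ) (a : Fin K → ℝ) :
    (blockI p a).det = ∏ k, a k ^ (p k) := by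
  rw [blockI, Matrix.det_diagonal, ← Finset.univ_sigma_univ, Finset.prod_sigma]
  simp

/-- The key computation for invertible `a`. -/
lemma blockHadamard_det_ne {K : ℕ} (p : Fin K → ℕ) (hp : ∀ k, 1 ≤ p k)
    (a : Fin K → ℝ) (B : Matrix (Fin K) (Fin K) ℝ) (ha : ∀ k, a k ≠ 0) :
    (blockI p a + blockJ p B).det =
      (∏ k, a k ^ (p k - 1)) * (Matrix.diagonal a + B * Pmat p).det := by
  classical
  let D' : Matrix (Σ k, Fin (p k)) (Σ k, Fin (p k)) ℝ :=
    Matrix.diagonal (fun i => (a i.1)⁻¹)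
  have hDD' : blockI p a * D' = 1 := by
    rw [blockI, show D' = Matrix.diagonal (fun i : Σ k, Fin (p k) => (a i.1)⁻¹) from rfl,
      Matrix.diagonal_mul_diagonal]
    convert Matrix.diagonal_one using 2
    ext i
    exact mul_inv_cancel₀ (ha i.1)
  have hsplit : blockI p a + blockJ p B
      = blockI p a * (1 + (D' * Emat p) * (B * (Emat p)ᵀ)) := by
    rw [Matrix.mul_add, Matrix.mul_one, blockJ_eq]
    congr 1
    rw [← Matrix.mul_assoc (blockI p a) (D' * Emat p) (B * (Emat p)ᵀ),
      ← Matrix.mul_assoc (blockI p a) D' (Emat p), hDD', Matrix.one_mul]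
  have hEDE : (B * (Emat p)ᵀ) * (D' * Emat p)
      = B * Matrix.diagonal (fun k => (p k : ℝ) * (a k)⁻¹) := by
    rw [Matrix.mul_assoc, Emat_inner p (fun k => (a k)⁻¹)]
  have hW : (1 + B * Matrix.diagonal (fun k => (p k : ℝ) * (a k)⁻¹)) * Matrix.diagonal a
      = Matrix.diagonal a + B * Pmat p := by
    rw [Matrix.add_mul, Matrix.one_mul]
    congr 1
    rw [Matrix.mul_assoc, Matrix.diagonal_mul_diagonal, Pmat]
    have : (fun k => (p k : ℝ) * (a k)⁻¹ * a k) = fun k => ((p k : ℝ)) :=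
      funext fun k => inv_mul_cancel_right₀ (ha k) _
    rw [this]
  have haprod : ∀ k, a k ^ p k = a k ^ (p k - 1) * a k := by
    intro k
    conv_lhs => rw [← Nat.sub_add_cancel (hp k)]
    rw [pow_succ]
  calc (blockI p a + blockJ p B).det
      = (blockI p a).det * (1 + (D' * Emat p) * (B * (Emat p)ᵀ)).det := by
        rw [hsplit, Matrix.det_mul]
    _ = (blockI p a).det * (1 + (B * (Emat p)ᵀ) * (D' * Emat p)).det := by
        rw [Matrix.det_one_add_mul_comm]
    _ = (∏ k, a k ^ p k) *
          (1 + B * Matrix.diagonal (fun k => (p k : ℝ) * (a k)⁻¹)).det := by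
        rw [blockI_det, hEDE]
    _ = (∏ k, a k ^ (p k - 1)) * ((∏ k, a k) *
          (1 + B * Matrix.diagonal (fun k => (p k : ℝ) * (a k)⁻¹)).det) := by
        rw [← mul_assoc, ← Finset.prod_mul_distrib]
        simp_rw [← haprod]
    _ = (∏ k, a k ^ (p k - 1)) * (Matrix.diagonal a + B * Pmat p).det := by
        rw [← hW, Matrix.det_mul, Matrix.det_diagonal]
        ring

/-- Determinant of a uniform-block matrix:
`det N = (∏ k, a_k ^ (p_k − 1)) * det Δ` where `Δ = A + B P`. -/
theorem blockHadamard_det {K : ℕ} (p : Fin K → ℕ) (hp : ∀ k, 1 ≤ p k)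
    (a : Fin K → ℝ) (B : Matrix (Fin K) (Fin K) ℝ) (hB : B.IsSymm) :
    (blockI p a + blockJ p B).det =
      (∏ k, a k ^ (p k - 1)) * (Matrix.diagonal a + B * Pmat p).det := by
  classical
  set f : (Fin K → ℝ) → ℝ := fun a => (blockI p a + blockJ p B).det with hf
  set g : (Fin K → ℝ) → ℝ := fun a =>
    (∏ k, a k ^ (p k - 1)) * (Matrix.diagonal a + B * Pmat p).det with hg
  have hfc : Continuous f := by
    apply Continuous.matrix_det
    apply continuous_pi; intro i; apply continuous_pi; intro j
    simp only [Matrix.add_apply, blockI, blockJ, Matrix.diagonal_apply]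
    rcases eq_or_ne i j with rfl | h
    · simp only [if_pos rfl]
      exact ((continuous_apply i.1).add continuous_const)
    · simp only [if_neg h]
      exact continuous_const
  have hgc : Continuous g := by
    apply Continuous.mul
    · exact continuous_finset_prod _ fun k _ => (continuous_apply k).pow _
    · apply Continuous.matrix_det
      apply continuous_pi; intro i; apply continuous_pi; intro j
      simp only [Matrix.add_apply, Matrix.diagonal_apply]
      rcases eq_or_ne i j with rfl | h
      · simp only [if_pos rfl]
        exact ((continuous_apply i).add continuous_const)
      · simp only [if_neg h]
        exact continuous_const
  have hdense : Dense {a : Fin K → ℝ | ∀ k, a k ≠ 0} := by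
    have : {a : Fin K → ℝ | ∀ k, a k ≠ 0}
        = Set.pi Set.univ (fun _ => ({0}ᶜ : Set ℝ)) := by
      ext a; simp [Set.mem_pi]
    rw [this]
    exact dense_pi Set.univ fun i _ => dense_compl_singleton 0
  have heq : f = g :=
    Continuous.ext_on hdense hfc hgc fun a ha => blockHadamard_det_ne p hp a B ha
  exact congrFun heq a
end

section
/- The characteristic polynomial of a uniform-block matrix N = A ∘ I[p] + B ∘ J[p] satisfies det(λ I_p − N) = (∏_{k=1}^K (λ − a_kk)^{p_k − 1}) × det(λ I_K − Δ), where Δ = A + B × P and P = diag(p_1,...,p_K). Consequently the eigenvalues of N are a_kk with multiplicity (p_k − 1) for each k, together with the K eigenvalues of Δ. -/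
open Matrix BigOperators

/-!
Off the finite set `{a_k}`, write `λ I - N = D - U B Uᵀ` with `D = diag(λ - a_k)` expanded
blockwise (invertible) and `U` the `p × K` block-indicator matrix. The matrix determinant lemma
gives `det D · det(1 - B Uᵀ D⁻¹ U)`, and `Uᵀ D⁻¹ U = P · diag(λ - a_k)⁻¹` collapses the second
factor to `det(λ I_K - Δ) / ∏ (λ - a_k)`. Both sides are continuous in `λ`, so the identity
extends to the whole real line.
-/

section BlockIndicator

variable {ι R : Type*} [Fintype ι] [DecidableEq ι] (p : ι → ℕ)

variable (R) in
def blockIndicator [Zero R] [One R] : Matrix (Σ k, Fin (p k)) ι R :=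
  Matrix.of fun i k => if i.1 = k then 1 else 0

theorem blockIndicator_mul_mul_transpose [NonAssocSemiring R] (B : Matrix ι ι R) :
    blockIndicator R p * B * (blockIndicator R p)ᵀ = of fun i j => B i.1 j.1 := by
  ext i j
  simp [blockIndicator, mul_apply]

theorem blockIndicator_transpose_mul_diagonal_mul [NonAssocSemiring R] (d : ι → R) :
    (blockIndicator R p)ᵀ * diagonal (fun i : Σ k, Fin (p k) => d i.1) * blockIndicator R p =
      diagonal fun k => (p k : R) * d k := by
  ext k k'
  simp only [mul_apply, transpose_apply, diagonal_apply, blockIndicator, of_apply]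
  rw [← Finset.univ_sigma_univ, Finset.sum_sigma]
  rcases eq_or_ne k k' with rfl | h
  · simp
  · simp [h, Ne.symm h]

theorem det_diagonal_comp_fst [CommRing R] (d : ι → R) :
    (diagonal fun i : Σ k, Fin (p k) => d i.1).det = ∏ k, d k ^ p k := by
  rw [det_diagonal, ← Finset.univ_sigma_univ, Finset.prod_sigma]
  simp

end BlockIndicator

theorem det_diagonal_sub_blockJ {K : ℕ} (p : Fin K → ℕ) (hp : ∀ k, 1 ≤ p k)
    (B : Matrix (Fin K) (Fin K) ℝ) (d : Fin K → ℝ) (hd : ∀ k, d k ≠ 0) :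
    (diagonal (fun i : Σ k, Fin (p k) => d i.1) - blockJ p B).det =
      (∏ k, d k ^ (p k - 1)) * (diagonal d - B * Pmat p).det := by
  set D : Matrix (Σ k, Fin (p k)) (Σ k, Fin (p k)) ℝ := diagonal fun i => d i.1
  have hD : IsUnit D.det := by
    rw [det_diagonal_comp_fst]
    exact (Finset.prod_ne_zero_iff.2 fun k _ => pow_ne_zero _ (hd k)).isUnit
  have hDinv : D⁻¹ = diagonal fun i => (d i.1)⁻¹ := by
    refine inv_eq_left_inv ?_
    simp [D, hd]
  have hcompl : 1 - B * diagonal (fun k => (p k : ℝ) * (d k)⁻¹) =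
      (diagonal d - B * Pmat p) * diagonal fun k => (d k)⁻¹ := by
    rw [sub_mul, diagonal_mul_diagonal, Pmat, Matrix.mul_assoc, diagonal_mul_diagonal]
    simp [hd]
  have hJ : blockJ p B = blockIndicator ℝ p * B * (blockIndicator ℝ p)ᵀ :=
    (blockIndicator_mul_mul_transpose p B).symm
  have hUDU : (blockIndicator ℝ p)ᵀ * D⁻¹ * blockIndicator ℝ p =
      diagonal fun k => (p k : ℝ) * (d k)⁻¹ := by
    rw [hDinv]
    exact blockIndicator_transpose_mul_diagonal_mul p fun k => (d k)⁻¹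
  set U := blockIndicator ℝ p
  calc (D - blockJ p B).det = (D + U * -(B * Uᵀ)).det := by
        rw [hJ, Matrix.mul_neg, ← sub_eq_add_neg, Matrix.mul_assoc]
    _ = D.det * (1 - B * diagonal fun k => (p k : ℝ) * (d k)⁻¹).det := by
        rw [det_add_mul _ _ hD, Matrix.neg_mul, Matrix.mul_assoc, Matrix.neg_mul,
          Matrix.mul_assoc, hUDU, ← sub_eq_add_neg]
    _ = (∏ k, d k ^ p k * (d k)⁻¹) * (diagonal d - B * Pmat p).det := by
        rw [hcompl, det_mul, det_diagonal_comp_fst, det_diagonal, Finset.prod_mul_distrib]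
        ring
    _ = (∏ k, d k ^ (p k - 1)) * (diagonal d - B * Pmat p).det := by
        congr 1
        exact Finset.prod_congr rfl fun k _ => by rw [pow_sub₀ _ (hd k) (hp k), pow_one]

theorem smul_one_sub_diagonal {n R : Type*} [DecidableEq n] [Ring R] (lam : R) (a : n → R) :
    lam • (1 : Matrix n n R) - diagonal a = diagonal fun i => lam - a i := by
  rw [smul_one_eq_diagonal, diagonal_sub]

theorem det_smul_one_sub_blockI_add_blockJ {K : ℕ} (p : Fin K → ℕ) (hp : ∀ k, 1 ≤ p k)
    (a : Fin K → ℝ) (B : Matrix (Fin K) (Fin K) ℝ) {lam : ℝ} (hlam : lam ∉ Set.range a) :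
    (lam • (1 : Matrix (Σ k, Fin (p k)) (Σ k, Fin (p k)) ℝ) - (blockI p a + blockJ p B)).det =
      (∏ k, (lam - a k) ^ (p k - 1)) *
        (lam • (1 : Matrix (Fin K) (Fin K) ℝ) - (diagonal a + B * Pmat p)).det := by
  rw [← sub_sub, ← sub_sub, blockI, smul_one_sub_diagonal, smul_one_sub_diagonal]
  exact det_diagonal_sub_blockJ p hp B _ fun k => sub_ne_zero.2 fun h => hlam ⟨k, h.symm⟩

theorem blockHadamard_charpoly_general {K : ℕ} (p : Fin K → ℕ) (hp : ∀ k, 1 ≤ p k)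
    (a : Fin K → ℝ) (B : Matrix (Fin K) (Fin K) ℝ) :
    ∀ lam : ℝ,
      (lam • (1 : Matrix (Σ k, Fin (p k)) (Σ k, Fin (p k)) ℝ)
          - (blockI p a + blockJ p B)).det =
        (∏ k, (lam - a k) ^ (p k - 1)) *
          (lam • (1 : Matrix (Fin K) (Fin K) ℝ) - (Matrix.diagonal a + B * Pmat p)).det := by
  have dense : Dense (Set.range a)ᶜ := (Set.finite_range a).countable.dense_compl ℝ
  exact congrFun <| Continuous.ext_on dense (by fun_prop) (by fun_prop)
    fun _ => det_smul_one_sub_blockI_add_blockJ p hp a B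

/-- Characteristic polynomial of a uniform-block matrix:
`det(λI_p − N) = (∏ k, (λ − a_k)^{p_k − 1}) * det(λI_K − Δ)`, `Δ = A + B P`.
Consequently the eigenvalues of `N` are the `a_k` with multiplicity `p_k − 1` together with
the eigenvalues of `Δ`. -/
theorem blockHadamard_charpoly {K : ℕ} (p : Fin K → ℕ) (hp : ∀ k, 1 ≤ p k)
    (a : Fin K → ℝ) (B : Matrix (Fin K) (Fin K) ℝ) (hB : B.IsSymm) :
    ∀ lam : ℝ,
      (lam • (1 : Matrix (Σ k, Fin (p k)) (Σ k, Fin (p k)) ℝ)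
          - (blockI p a + blockJ p B)).det =
        (∏ k, (lam - a k) ^ (p k - 1)) *
          (lam • (1 : Matrix (Fin K) (Fin K) ℝ) - (Matrix.diagonal a + B * Pmat p)).det :=
  blockHadamard_charpoly_general p hp a B
end

section
/- A symmetric uniform-block matrix N = A ∘ I[p] + B ∘ J[p] is positive definite if and only if the diagonal matrix A is positive definite (a_kk > 0 for all k) and all K eigenvalues of Δ = A + B×P are positive, where P = diag(p_1,...,p_K). -/
open Matrix BigOperators

/-! With `s` the vector of block sums of `x`, `xᵀ N x = ∑ᵢ a_{k(i)} xᵢ² + sᵀ B s`.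
Cauchy–Schwarz on each block bounds this below by `sᵀ C s` for `C = diag(a_k / p_k) + B`, with
equality for block-constant `x`, while vectors with zero block sums (available because `p_k > 1`)
isolate the `a_k`; hence `N ≻ 0 ↔ a > 0 ∧ C ≻ 0`. Finally `Δ = C P` has the characteristic
polynomial of `P^{1/2} C P^{1/2}`, which is congruent to `C`. -/

namespace Matrix

variable {n : Type*} [DecidableEq n]

theorem IsSymm.isHermitian_diagonal_add {B : Matrix n n ℝ} (hB : B.IsSymm) (d : n → ℝ) :
    (diagonal d + B).IsHermitian :=
  (isHermitian_diagonal d).add (isHermitian_iff_isSymm.mpr hB)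

variable [Fintype n]

theorem dotProduct_diagonal_add_mulVec (d : n → ℝ) (B : Matrix n n ℝ) (c : n → ℝ) :
    c ⬝ᵥ ((diagonal d + B) *ᵥ c) = ∑ k, d k * c k ^ 2 + c ⬝ᵥ (B *ᵥ c) := by
  rw [add_mulVec, dotProduct_add]
  simp only [dotProduct, mulVec_diagonal]
  congr 1
  exact Finset.sum_congr rfl fun k _ => by ring

theorem IsHermitian.posDef_iff_forall_isRoot_charpoly_pos {M : Matrix n n ℝ}
    (hM : M.IsHermitian) : M.PosDef ↔ ∀ μ : ℝ, M.charpoly.IsRoot μ → 0 < μ := by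
  rw [hM.posDef_iff_eigenvalues_pos]
  simp only [← Polynomial.mem_roots M.charpoly_monic.ne_zero, hM.roots_charpoly_eq_eigenvalues,
    Multiset.mem_map, Finset.mem_val, Finset.mem_univ, true_and]
  constructor
  · rintro h _ ⟨i, rfl⟩
    exact h i
  · exact fun h i => h _ ⟨i, rfl⟩

theorem IsHermitian.posDef_iff_forall_isRoot_charpoly_mul_diagonal_pos {C : Matrix n n ℝ}
    (hC : C.IsHermitian) {d : n → ℝ} (hd : ∀ i, 0 < d i) :
    C.PosDef ↔ ∀ μ : ℝ, (C * diagonal d).charpoly.IsRoot μ → 0 < μ := by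
  set S : Matrix n n ℝ := diagonal fun i => √(d i)
  have hSS : diagonal d = S * S := by
    simp only [S, diagonal_mul_diagonal, Real.mul_self_sqrt (hd _).le]
  have hS : IsUnit S := isUnit_diagonal.mpr <|
    Pi.isUnit_iff.mpr fun i => (Real.sqrt_pos.mpr (hd i)).ne'.isUnit
  have hSstar : Sᴴ = S := by simp [S]
  have hcharpoly : (C * diagonal d).charpoly = (Sᴴ * C * S).charpoly := by
    rw [hSS, hSstar, ← mul_assoc, charpoly_mul_comm, mul_assoc]
  rw [hcharpoly, ← (isHermitian_conjTranspose_mul_mul S hC).posDef_iff_forall_isRoot_charpoly_pos,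
    ← star_eq_conjTranspose, hS.posDef_star_left_conjugate_iff]

end Matrix

section Block

variable {K : ℕ} {p : Fin K → ℕ}

variable (p) in
def blockSum (x : (Σ k, Fin (p k)) → ℝ) : Fin K → ℝ := fun k => ∑ j, x ⟨k, j⟩

theorem dotProduct_blockI_mulVec (a : Fin K → ℝ) (x : (Σ k, Fin (p k)) → ℝ) :
    x ⬝ᵥ (blockI p a *ᵥ x) = ∑ i, a i.1 * x i ^ 2 := by
  simp only [blockI, mulVec_diagonal, dotProduct]
  exact Finset.sum_congr rfl fun i _ => by ring

theorem dotProduct_comp_fst (x : (Σ k, Fin (p k)) → ℝ) (v : Fin K → ℝ) :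
    x ⬝ᵥ (fun i => v i.1) = blockSum p x ⬝ᵥ v := by
  simp only [dotProduct, blockSum, Fintype.sum_sigma, Finset.sum_mul]

theorem blockJ_mulVec (B : Matrix (Fin K) (Fin K) ℝ) (x : (Σ k, Fin (p k)) → ℝ) :
    blockJ p B *ᵥ x = fun i => (B *ᵥ blockSum p x) i.1 := by
  ext i
  simpa only [blockJ, mulVec, dotProduct_comm] using dotProduct_comp_fst x (B i.1)

theorem dotProduct_blockJ_mulVec (B : Matrix (Fin K) (Fin K) ℝ) (x : (Σ k, Fin (p k)) → ℝ) :
    x ⬝ᵥ (blockJ p B *ᵥ x) = blockSum p x ⬝ᵥ (B *ᵥ blockSum p x) := by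
  rw [blockJ_mulVec, dotProduct_comp_fst]

theorem sq_blockSum_div_le (x : (Σ k, Fin (p k)) → ℝ) (k : Fin K) :
    blockSum p x k ^ 2 / p k ≤ ∑ j, x ⟨k, j⟩ ^ 2 := by
  refine div_le_of_le_mul₀ (Nat.cast_nonneg _) (Finset.sum_nonneg fun j _ => sq_nonneg _) ?_
  simpa [blockSum, mul_comm] using
    sq_sum_le_card_mul_sum_sq (s := Finset.univ) (f := fun j => x ⟨k, j⟩)

noncomputable def blockSpread (c : Fin K → ℝ) : (Σ k, Fin (p k)) → ℝ :=
  fun i => c i.1 / p i.1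

theorem blockSum_blockSpread (hp : ∀ k, p k ≠ 0) (c : Fin K → ℝ) :
    blockSum p (blockSpread c) = c := by
  ext k
  simpa [blockSum, blockSpread] using mul_div_cancel₀ (c k) (Nat.cast_ne_zero.mpr (hp k))

theorem dotProduct_blockI_add_blockJ_mulVec (a : Fin K → ℝ) (B : Matrix (Fin K) (Fin K) ℝ)
    (x : (Σ k, Fin (p k)) → ℝ) :
    x ⬝ᵥ ((blockI p a + blockJ p B) *ᵥ x) =
      ∑ i, a i.1 * x i ^ 2 + blockSum p x ⬝ᵥ (B *ᵥ blockSum p x) := by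
  rw [add_mulVec, dotProduct_add, dotProduct_blockI_mulVec, dotProduct_blockJ_mulVec]

theorem dotProduct_blockSum_le_dotProduct_blockI_add_blockJ_mulVec {a : Fin K → ℝ}
    (ha : ∀ k, 0 ≤ a k) (B : Matrix (Fin K) (Fin K) ℝ) (x : (Σ k, Fin (p k)) → ℝ) :
    blockSum p x ⬝ᵥ ((diagonal (fun k => a k / p k) + B) *ᵥ blockSum p x) ≤
      x ⬝ᵥ ((blockI p a + blockJ p B) *ᵥ x) := by
  rw [dotProduct_diagonal_add_mulVec, dotProduct_blockI_add_blockJ_mulVec, add_le_add_iff_right,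
    Fintype.sum_sigma]
  refine Finset.sum_le_sum fun k _ => ?_
  dsimp only
  rw [← Finset.mul_sum, div_mul_eq_mul_div, mul_div_assoc]
  exact mul_le_mul_of_nonneg_left (sq_blockSum_div_le x k) (ha k)

theorem dotProduct_blockI_add_blockJ_mulVec_blockSpread (hp : ∀ k, p k ≠ 0) (a : Fin K → ℝ)
    (B : Matrix (Fin K) (Fin K) ℝ) (c : Fin K → ℝ) :
    blockSpread c ⬝ᵥ ((blockI p a + blockJ p B) *ᵥ blockSpread c) =
      c ⬝ᵥ ((diagonal (fun k => a k / p k) + B) *ᵥ c) := by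
  rw [dotProduct_diagonal_add_mulVec, dotProduct_blockI_add_blockJ_mulVec,
    blockSum_blockSpread hp, Fintype.sum_sigma]
  congr 1
  refine Finset.sum_congr rfl fun k _ => ?_
  have hpk : (p k : ℝ) ≠ 0 := Nat.cast_ne_zero.mpr (hp k)
  simp only [blockSpread, Finset.sum_const, Finset.card_univ, Fintype.card_fin, nsmul_eq_mul]
  field_simp

theorem pos_of_posDef_blockI_add_blockJ {a : Fin K → ℝ} {B : Matrix (Fin K) (Fin K) ℝ}
    (h : (blockI p a + blockJ p B).PosDef) {k : Fin K} (hk : 1 < p k) : 0 < a k := by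
  set i₀ : Σ k, Fin (p k) := ⟨k, ⟨0, by omega⟩⟩
  set i₁ : Σ k, Fin (p k) := ⟨k, ⟨1, hk⟩⟩
  have hne : i₀ ≠ i₁ := by simp [i₀, i₁]
  set x : (Σ k, Fin (p k)) → ℝ := Pi.single i₀ 1 - Pi.single i₁ 1
  have hx : x ≠ 0 := fun h => by simpa [x, hne] using congrFun h i₀
  have hsum : blockSum p x = 0 := by
    ext k'
    by_cases hk' : k' = k
    · subst hk'
      simp [blockSum, x, i₀, i₁, Finset.sum_sub_distrib, Pi.single_apply]
    · simp [blockSum, x, i₀, i₁, hk']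
  have hpos := h.dotProduct_mulVec_pos hx
  rw [star_trivial, dotProduct_blockI_add_blockJ_mulVec, hsum, mulVec_zero, dotProduct_zero,
    add_zero, Finset.sum_eq_add_of_mem i₀ i₁ (Finset.mem_univ _) (Finset.mem_univ _) hne]
    at hpos
  · simp [x, hne, hne.symm, i₀, i₁] at hpos
    linarith
  · intro i _ hi
    simp [x, hi.1, hi.2]

theorem isHermitian_blockI_add_blockJ (a : Fin K → ℝ) {B : Matrix (Fin K) (Fin K) ℝ}
    (hB : B.IsSymm) : (blockI p a + blockJ p B).IsHermitian :=
  (isHermitian_diagonal _).add <| isHermitian_iff_isSymm.mpr <|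
    IsSymm.ext fun i j => hB.apply i.1 j.1

theorem posDef_diagonal_div_add_of_posDef_blockI_add_blockJ (hp : ∀ k, p k ≠ 0)
    {a : Fin K → ℝ} {B : Matrix (Fin K) (Fin K) ℝ} (hB : B.IsSymm)
    (h : (blockI p a + blockJ p B).PosDef) : (diagonal (fun k => a k / p k) + B).PosDef := by
  refine .of_dotProduct_mulVec_pos (hB.isHermitian_diagonal_add _) fun c hc => ?_
  have hspread : blockSpread c ≠ 0 := fun h0 => hc <| by
    rw [← blockSum_blockSpread hp c, h0]
    ext k
    simp [blockSum]
  simpa only [star_trivial, dotProduct_blockI_add_blockJ_mulVec_blockSpread hp] using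
    h.dotProduct_mulVec_pos hspread

theorem posDef_blockI_add_blockJ {a : Fin K → ℝ} (ha : ∀ k, 0 < a k)
    {B : Matrix (Fin K) (Fin K) ℝ} (hB : B.IsSymm)
    (hC : (diagonal (fun k => a k / p k) + B).PosDef) : (blockI p a + blockJ p B).PosDef := by
  refine .of_dotProduct_mulVec_pos (isHermitian_blockI_add_blockJ a hB) fun x hx => ?_
  rw [star_trivial]
  by_cases hs : blockSum p x = 0
  · rw [dotProduct_blockI_add_blockJ_mulVec, hs, mulVec_zero, dotProduct_zero, add_zero]
    obtain ⟨i, hi⟩ := Function.ne_iff.mp hx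
    exact Finset.sum_pos' (fun i _ => mul_nonneg (ha _).le (sq_nonneg _))
      ⟨i, Finset.mem_univ _, mul_pos (ha _) (sq_pos_of_ne_zero hi)⟩
  · have hCs := hC.dotProduct_mulVec_pos hs
    rw [star_trivial] at hCs
    exact hCs.trans_le (dotProduct_blockSum_le_dotProduct_blockI_add_blockJ_mulVec
      (fun k => (ha k).le) B x)

theorem posDef_blockI_add_blockJ_iff (hp : ∀ k, 1 < p k) {a : Fin K → ℝ}
    {B : Matrix (Fin K) (Fin K) ℝ} (hB : B.IsSymm) :
    (blockI p a + blockJ p B).PosDef ↔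
      (∀ k, 0 < a k) ∧ (diagonal (fun k => a k / p k) + B).PosDef :=
  ⟨fun h => ⟨fun k => pos_of_posDef_blockI_add_blockJ h (hp k),
      posDef_diagonal_div_add_of_posDef_blockI_add_blockJ
        (fun k => (Nat.zero_lt_of_lt (hp k)).ne') hB h⟩,
    fun h => posDef_blockI_add_blockJ h.1 hB h.2⟩

end Block

/-- A symmetric uniform-block matrix is positive definite iff `A` is positive definite
(`a_k > 0` for all `k`) and all eigenvalues of `Δ = A + B P` (which are real) are positive. -/
theorem blockHadamard_posDef_iff {K : ℕ} (p : Fin K → ℕ) (hp : ∀ k, 1 < p k)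
    (a : Fin K → ℝ) (B : Matrix (Fin K) (Fin K) ℝ) (hB : B.IsSymm) :
    (blockI p a + blockJ p B).PosDef ↔
      ((∀ k, 0 < a k) ∧
        ∀ μ : ℝ, (Matrix.diagonal a + B * Pmat p).charpoly.IsRoot μ → 0 < μ) := by
  have hp₀ : ∀ k, (0 : ℝ) < p k := fun k => Nat.cast_pos.mpr (Nat.zero_lt_of_lt (hp k))
  have hΔ : diagonal a + B * Pmat p =
      (diagonal (fun k => a k / p k) + B) * diagonal (fun k => (p k : ℝ)) := by
    rw [add_mul, diagonal_mul_diagonal, Pmat]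
    congr
    ext k
    exact (div_mul_cancel₀ _ (hp₀ k).ne').symm
  rw [posDef_blockI_add_blockJ_iff hp hB, hΔ,
    (hB.isHermitian_diagonal_add _).posDef_iff_forall_isRoot_charpoly_mul_diagonal_pos hp₀]
end

section
/- If λ is an eigenvalue of Δ = A + B×P with eigenvector ξ = (ξ_1,...,ξ_K)ᵀ, then the p-dimensional vector (ξ_1 1_{1×p_1}, ..., ξ_K 1_{1×p_K})ᵀ (the vector whose entries in the k-th block all equal ξ_k) is an eigenvector of the uniform-block matrix N = A ∘ I[p] + B ∘ J[p] with the same eigenvalue λ. -/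
open Matrix BigOperators

/-- An eigenvector `ξ` of `Δ = A + B P` lifts to the eigenvector of the uniform-block matrix
`N = A ∘ I[p] + B ∘ J[p]` whose entries in block `k` all equal `ξ k`, with the same
eigenvalue. -/
theorem blockHadamard_eigenvector_lift {K : ℕ} (p : Fin K → ℕ) (hp : ∀ k, 0 < p k)
    (a : Fin K → ℝ) (B : Matrix (Fin K) (Fin K) ℝ)
    (lam : ℝ) (ξ : Fin K → ℝ) (hξ : ξ ≠ 0)
    (heig : (Matrix.diagonal a + B * Pmat p) *ᵥ ξ = lam • ξ) :
    (blockI p a + blockJ p B) *ᵥ (fun i => ξ i.1) = lam • (fun i => ξ i.1) ∧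
    (fun i : Σ k, Fin (p k) => ξ i.1) ≠ 0 := by
  have key : ∀ k, a k * ξ k + ∑ j, B k j * ((p j : ℝ) * ξ j) = lam * ξ k := by
    intro k
    have h := congrFun heig k
    rw [add_mulVec, Pi.add_apply, mulVec_diagonal, Pi.smul_apply, smul_eq_mul] at h
    rw [← h]
    congr 1
    simp [mulVec, dotProduct, Pmat, Matrix.mul_diagonal, mul_assoc]
  constructor
  · funext i
    have hsig : (∑ j : Σ k, Fin (p k), blockJ p B i j * ξ j.1)
        = ∑ j, B i.1 j * ((p j : ℝ) * ξ j) := by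
      rw [← Finset.univ_sigma_univ, Finset.sum_sigma]
      refine Finset.sum_congr rfl fun j _ => ?_
      simp [blockJ, Finset.sum_const, Fintype.card_fin]
      ring
    have hI : (∑ j : Σ k, Fin (p k), blockI p a i j * ξ j.1) = a i.1 * ξ i.1 := by
      rw [Finset.sum_eq_single i]
      · simp [blockI]
      · intro j _ hj; simp [blockI, Matrix.diagonal_apply_ne _ (Ne.symm hj)]
      · simp
    simp only [mulVec, dotProduct, Pi.add_apply, Pi.smul_apply, smul_eq_mul]
    calc ∑ j : Σ k, Fin (p k), (blockI p a + blockJ p B) i j * ξ j.1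
        = (∑ j : Σ k, Fin (p k), blockI p a i j * ξ j.1)
          + ∑ j : Σ k, Fin (p k), blockJ p B i j * ξ j.1 := by
          rw [← Finset.sum_add_distrib]
          exact Finset.sum_congr rfl fun j _ => by simp [add_mul]
      _ = lam * ξ i.1 := by rw [hI, hsig, key]
  · intro h
    obtain ⟨k, hk⟩ := Function.ne_iff.mp hξ
    exact hk (congrFun h ⟨k, ⟨0, hp k⟩⟩)
end

section
/- Let Σ = A ∘ I[p] + B ∘ J[p] be a positive-definite covariance matrix with uniform-block structure. Then its correlation matrix corr(Σ) = D^{-1/2} Σ D^{-1/2}, where D is the diagonal of Σ, is the uniform-block matrix (C^{-1/2} A C^{-1/2}) ∘ I[p] + (C^{-1/2} B C^{-1/2}) ∘ J[p], where C = diag(c_11,...,c_KK) with c_kk = a_kk + b_kk. -/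
open Matrix BigOperators

/-- The correlation matrix of a positive definite uniform-block covariance matrix
`Σ = A ∘ I[p] + B ∘ J[p]` is the uniform-block matrix
`(C^{-1/2} A C^{-1/2}) ∘ I[p] + (C^{-1/2} B C^{-1/2}) ∘ J[p]` with `C = diag(a_kk + b_kk)`. -/
theorem blockHadamard_corr {K : ℕ} (p : Fin K → ℕ) (hp : ∀ k, 0 < p k)
    (a : Fin K → ℝ) (B : Matrix (Fin K) (Fin K) ℝ) (hB : B.IsSymm)
    (hpd : (blockI p a + blockJ p B).PosDef) :
    Matrix.diagonal (fun i => (Real.sqrt ((blockI p a + blockJ p B) i i))⁻¹) *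
        (blockI p a + blockJ p B) *
      Matrix.diagonal (fun i => (Real.sqrt ((blockI p a + blockJ p B) i i))⁻¹) =
      blockI p (fun k => (Real.sqrt (a k + B k k))⁻¹ * a k * (Real.sqrt (a k + B k k))⁻¹) +
        blockJ p (Matrix.diagonal (fun k => (Real.sqrt (a k + B k k))⁻¹) * B *
          Matrix.diagonal (fun k => (Real.sqrt (a k + B k k))⁻¹)) := by
  ext i j
  simp only [Matrix.diagonal_mul, Matrix.mul_diagonal, Matrix.add_apply, blockI, blockJ,
    Matrix.diagonal_apply_eq, Matrix.diagonal_apply]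
  rcases eq_or_ne i j with rfl | h
  · simp; ring
  · rcases eq_or_ne i.1 j.1 with h1 | h1
    · simp [h, h1]
    · simp [h, h1]
end

section
/- For invertible diagonal K×K matrices A and Δ = A + B×P (B symmetric, P = diag(p_1,...,p_K) diagonal invertible), the matrix B* = −Δ^{-1} × B × A^{-1} is symmetric, i.e., A^{-1} × B × (A + P×B)^{-1} = (A + B×P)^{-1} × B × A^{-1}. -/
open Matrix BigOperators

/-- Symmetry of `B* = −Δ⁻¹ B A⁻¹`:
`A⁻¹ B (A + P B)⁻¹ = (A + B P)⁻¹ B A⁻¹` for invertible diagonal `A`, symmetric `B`,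
invertible diagonal `P`, with `A + B P` and `A + P B` invertible. -/
theorem Bstar_symm {K : ℕ} (p : Fin K → ℕ) (hP : IsUnit (Pmat p))
    (a : Fin K → ℝ) (hA : IsUnit (Matrix.diagonal a))
    (B : Matrix (Fin K) (Fin K) ℝ) (hB : B.IsSymm)
    (h₁ : IsUnit (Matrix.diagonal a + B * Pmat p))
    (h₂ : IsUnit (Matrix.diagonal a + Pmat p * B)) :
    (Matrix.diagonal a)⁻¹ * B * (Matrix.diagonal a + Pmat p * B)⁻¹ =
      (Matrix.diagonal a + B * Pmat p)⁻¹ * B * (Matrix.diagonal a)⁻¹ := by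
  set A := Matrix.diagonal a with hAdef
  set P := Pmat p with hPdef
  have hdA : IsUnit A.det := (Matrix.isUnit_iff_isUnit_det A).mp hA
  have hd1 : IsUnit (A + B * P).det := (Matrix.isUnit_iff_isUnit_det _).mp h₁
  have hd2 : IsUnit (A + P * B).det := (Matrix.isUnit_iff_isUnit_det _).mp h₂
  have hcomm : P * A⁻¹ = A⁻¹ * P := by
    rw [hAdef, hPdef, Pmat, Matrix.inv_diagonal, Matrix.diagonal_mul_diagonal,
      Matrix.diagonal_mul_diagonal]
    exact congrArg Matrix.diagonal (funext fun k => mul_comm _ _)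
  have key : (A + B * P) * (A⁻¹ * B) = (B * A⁻¹) * (A + P * B) := by
    rw [Matrix.add_mul, Matrix.mul_add, ← mul_assoc, Matrix.mul_nonsing_inv A hdA,
      one_mul, mul_assoc B A⁻¹ A, Matrix.nonsing_inv_mul A hdA, mul_one, ← mul_assoc]
    congr 1
    rw [mul_assoc, mul_assoc, ← mul_assoc P A⁻¹ B, hcomm, mul_assoc, ← mul_assoc]
  calc A⁻¹ * B * (A + P * B)⁻¹
      = (A + B * P)⁻¹ * ((A + B * P) * (A⁻¹ * B)) * (A + P * B)⁻¹ := by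
        rw [← mul_assoc, ← mul_assoc, Matrix.nonsing_inv_mul _ hd1, one_mul, mul_assoc]
    _ = (A + B * P)⁻¹ * ((B * A⁻¹) * (A + P * B)) * (A + P * B)⁻¹ := by rw [key]
    _ = (A + B * P)⁻¹ * B * A⁻¹ := by
        rw [mul_assoc, mul_assoc, Matrix.mul_nonsing_inv _ hd2, mul_one, ← mul_assoc]
end
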